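/- arXiv:2310.01272 — 4 statements merged into one kernel-verified Lean document; each statement's English description precedes it below -/
import Mathlib

section
/- Let W be an N×N nonnegative row-stochastic matrix whose associated directed graph G[W] (edge i→j iff W i j > 0) is strongly connected. Then there exists a vector ζ ∈ ℝ^N with all entries strictly positive and summing to 1 such that ζᵀ W = ζᵀ; moreover ζ is unique: any vector η ∈ ℝ^N with ηᵀ W = ηᵀ is a scalar multiple of ζ. -/
open Matrix Finset

/-- A walk of length `k` from `i` to `j` in the directed graph `G[W]`
(edge `a → b` iff `W a b > 0`). -/
def Matrix.HasWalkOfLength {N : ℕ} (W : Matrix (Fin N) (Fin N) ℝ) (k : ℕ)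
    (i j : Fin N) : Prop :=
  ∃ f : Fin (k + 1) → Fin N, f 0 = i ∧ f (Fin.last k) = j ∧
    ∀ t : Fin k, 0 < W (f t.castSucc) (f t.succ)

/-- `G[W]` is strongly connected: there is a directed path from every node to
every other node. -/
def Matrix.StronglyConnectedGraph {N : ℕ} (W : Matrix (Fin N) (Fin N) ℝ) : Prop :=
  ∀ i j : Fin N, i ≠ j → ∃ k : ℕ, 0 < k ∧ W.HasWalkOfLength k i j

/-- `k` is the length of some directed cycle of `G[W]`: a directed closed walk of
positive length with no repeated nodes except the initial/final one. -/
def Matrix.IsCycleLength {N : ℕ} (W : Matrix (Fin N) (Fin N) ℝ) (k : ℕ) : Prop :=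
  0 < k ∧ ∃ f : Fin (k + 1) → Fin N,
    f (Fin.last k) = f 0 ∧
    (∀ t : Fin k, 0 < W (f t.castSucc) (f t.succ)) ∧
    Function.Injective fun t : Fin k => f t.castSucc

/-- `G[W]` is aperiodic: the gcd of the lengths of all directed cycles equals `1`,
i.e. the only natural number dividing every cycle length is `1`. -/
def Matrix.AperiodicGraph {N : ℕ} (W : Matrix (Fin N) (Fin N) ℝ) : Prop :=
  ∀ d : ℕ, (∀ k : ℕ, W.IsCycleLength k → d ∣ k) → d = 1

/-!
`W` fixes the all-ones vector, so `Wᵀ` has a nonzero fixed vector. If `η ᵥ* W = η` then also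
`|η| ᵥ* W = |η|`: entrywise `|η ᵥ* W| ≤ |η| ᵥ* W`, and both sides have the same total mass because
`W` is row-stochastic. A nonnegative fixed vector that is positive at `a` is positive at every `b`
with `W a b > 0`, hence everywhere by strong connectivity. Applied to `|η|`, this shows that a fixed
vector vanishing at one node vanishes everywhere, so the fixed space is a line, spanned by a
positive vector.
-/

lemma exists_ne_zero_vecMul_eq_self {K n : Type*} [Field K] [Fintype n] [DecidableEq n]
    [Nonempty n] {W : Matrix n n K} (hW : W *ᵥ 1 = 1) :
    ∃ η ≠ 0, η ᵥ* W = η := by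
  have hdet : (W - 1).det = 0 :=
    exists_mulVec_eq_zero_iff.1 ⟨1, one_ne_zero, by rw [sub_mulVec, hW, one_mulVec, sub_self]⟩
  obtain ⟨η, hη0, hη⟩ := exists_vecMul_eq_zero_iff.2 hdet
  exact ⟨η, hη0, by rwa [vecMul_sub, vecMul_one, sub_eq_zero] at hη⟩

section RowStochastic

variable {R n : Type*} [Field R] [LinearOrder R] [IsStrictOrderedRing R] [Fintype n]
  {W : Matrix n n R}

lemma abs_vecMul_apply_le (hW : ∀ i j, 0 ≤ W i j) (x : n → R) (j : n) :
    |(x ᵥ* W) j| ≤ (|x| ᵥ* W) j := by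
  simp only [vecMul, dotProduct, Pi.abs_apply]
  refine (abs_sum_le_sum_abs _ _).trans_eq (sum_congr rfl fun i _ => ?_)
  rw [abs_mul, abs_of_nonneg (hW i j)]

lemma pos_of_vecMul_eq_self_of_pos (hW : ∀ i j, 0 ≤ W i j) {v : n → R} (hv : 0 ≤ v)
    (hfix : v ᵥ* W = v) {a b : n} (hWab : 0 < W a b) (ha : 0 < v a) : 0 < v b := by
  rw [← hfix]
  exact lt_of_lt_of_le (mul_pos ha hWab)
    (single_le_sum (fun i _ => mul_nonneg (hv i) (hW i b)) (mem_univ a))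

variable [DecidableEq n]

lemma sum_vecMul_of_mem_rowStochastic (hW : W ∈ rowStochastic R n) (x : n → R) :
    ∑ j, (x ᵥ* W) j = ∑ j, x j := by
  simpa only [dotProduct_one, hW.2] using (dotProduct_mulVec x W 1).symm

lemma abs_vecMul_eq_self (hW : W ∈ rowStochastic R n) {x : n → R} (hx : x ᵥ* W = x) :
    |x| ᵥ* W = |x| := by
  have hle : ∀ j ∈ univ, |x| j ≤ (|x| ᵥ* W) j := fun j _ => by
    simpa only [hx, Pi.abs_apply] using abs_vecMul_apply_le hW.1 x j
  have hsum := (sum_vecMul_of_mem_rowStochastic hW |x|).symm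
  funext j
  exact ((sum_eq_sum_iff_of_le hle).1 hsum j (mem_univ j)).symm

end RowStochastic

namespace Matrix

variable {N : ℕ} {W : Matrix (Fin N) (Fin N) ℝ}

lemma HasWalkOfLength.of_edge_closed {P : Fin N → Prop} (hP : ∀ a b, 0 < W a b → P a → P b)
    {k : ℕ} {i j : Fin N} (hwalk : W.HasWalkOfLength k i j) (hi : P i) : P j := by
  obtain ⟨f, rfl, rfl, hedge⟩ := hwalk
  exact Fin.induction hi (fun t ht => hP _ _ (hedge t) ht) (Fin.last k)

lemma StronglyConnectedGraph.of_edge_closed (hsc : W.StronglyConnectedGraph) {P : Fin N → Prop}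
    (hP : ∀ a b, 0 < W a b → P a → P b) {i : Fin N} (hi : P i) (j : Fin N) : P j := by
  rcases eq_or_ne i j with rfl | hij
  · exact hi
  obtain ⟨k, -, hwalk⟩ := hsc i j hij
  exact hwalk.of_edge_closed hP hi

lemma StronglyConnectedGraph.pos_of_vecMul_eq_self (hsc : W.StronglyConnectedGraph)
    (hW : ∀ i j, 0 ≤ W i j) {v : Fin N → ℝ} (hv : 0 ≤ v) (hfix : v ᵥ* W = v) {i : Fin N}
    (hi : 0 < v i) (j : Fin N) : 0 < v j :=
  hsc.of_edge_closed (fun _ _ => pos_of_vecMul_eq_self_of_pos hW hv hfix) hi j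

lemma StronglyConnectedGraph.eq_zero_of_vecMul_eq_self (hsc : W.StronglyConnectedGraph)
    (hW : W ∈ rowStochastic ℝ (Fin N)) {x : Fin N → ℝ} (hx : x ᵥ* W = x) {i : Fin N}
    (hi : x i = 0) : x = 0 := by
  by_contra hx0
  obtain ⟨j, hj⟩ := Function.ne_iff.1 hx0
  have := hsc.pos_of_vecMul_eq_self hW.1 (abs_nonneg x) (abs_vecMul_eq_self hW hx)
    (abs_pos.2 hj) i
  simp [hi] at this

lemma StronglyConnectedGraph.eq_smul_of_vecMul_eq_self (hsc : W.StronglyConnectedGraph)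
    (hW : W ∈ rowStochastic ℝ (Fin N)) {ζ η : Fin N → ℝ} (hζ : ζ ᵥ* W = ζ)
    (hη : η ᵥ* W = η) {i : Fin N} (hζi : ζ i ≠ 0) : η = (η i / ζ i) • ζ := by
  refine sub_eq_zero.1 (hsc.eq_zero_of_vecMul_eq_self hW (i := i) ?_ ?_)
  · rw [sub_vecMul, smul_vecMul, hη, hζ]
  · simp [div_mul_cancel₀ _ hζi]

end Matrix

/-- a strongly connected row-stochastic matrix admits a unique
strictly positive left eigenvector for the eigenvalue `1`, normalized to sum `1`. -/
theorem strongly_connected_left_perron_vector {N : ℕ} (hN : 0 < N)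
    (W : Matrix (Fin N) (Fin N) ℝ)
    (hnonneg : ∀ i j, 0 ≤ W i j)
    (hrow : ∀ i, ∑ j, W i j = 1)
    (hsc : W.StronglyConnectedGraph) :
    ∃ ζ : Fin N → ℝ, (∀ i, 0 < ζ i) ∧ (∑ i, ζ i = 1) ∧ ζ ᵥ* W = ζ ∧
      ∀ η : Fin N → ℝ, η ᵥ* W = η → ∃ c : ℝ, η = c • ζ := by
  have hW : W ∈ rowStochastic ℝ (Fin N) := mem_rowStochastic_iff_sum.2 ⟨hnonneg, hrow⟩
  have : Nonempty (Fin N) := ⟨⟨0, hN⟩⟩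
  obtain ⟨x, hx0, hx⟩ := exists_ne_zero_vecMul_eq_self hW.2
  obtain ⟨i, hi⟩ := Function.ne_iff.1 hx0
  have hfix : |x| ᵥ* W = |x| := abs_vecMul_eq_self hW hx
  have hpos : ∀ j, 0 < |x| j :=
    hsc.pos_of_vecMul_eq_self hnonneg (abs_nonneg x) hfix (abs_pos.2 hi)
  have hS : 0 < ∑ j, |x| j := sum_pos (fun j _ => hpos j) univ_nonempty
  set ζ := (∑ j, |x| j)⁻¹ • |x|
  have hζpos : ∀ j, 0 < ζ j := fun j => mul_pos (inv_pos.2 hS) (hpos j)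
  have hζ : ζ ᵥ* W = ζ := by rw [smul_vecMul, hfix]
  refine ⟨ζ, hζpos, ?_, hζ,
    fun η hη => ⟨_, hsc.eq_smul_of_vecMul_eq_self hW hζ hη (hζpos i).ne'⟩⟩
  simp only [ζ, Pi.smul_apply, smul_eq_mul, ← mul_sum, inv_mul_cancel₀ hS.ne']
end

section
/- Let W be an N×N row-stochastic matrix all of whose entries are at least δ for some δ with 0 < δ ≤ 1/N. Then for every x ∈ ℝ^N, the vector y = W x satisfies max_i y_i − min_i y_i ≤ (1 − N·δ)·(max_i x_i − min_i x_i). -/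
open Matrix Finset

/-- a row-stochastic matrix with all entries at least `δ` contracts
the spread `max − min` by the factor `1 − N·δ`. -/
theorem stochastic_matrix_spread_contraction {N : ℕ}
    (W : Matrix (Fin N) (Fin N) ℝ) (δ : ℝ)
    (hδ0 : 0 < δ) (hδN : δ ≤ 1 / N)
    (hentry : ∀ i j, δ ≤ W i j)
    (hrow : ∀ i, ∑ j, W i j = 1)
    (x : Fin N → ℝ) :
    (⨆ i, (W *ᵥ x) i) - (⨅ i, (W *ᵥ x) i)
      ≤ (1 - N * δ) * ((⨆ i, x i) - (⨅ i, x i)) := by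
  rcases Nat.eq_zero_or_pos N with hN | hN
  · subst hN
    simp [Real.iSup_of_isEmpty, Real.iInf_of_isEmpty]
  · haveI : Nonempty (Fin N) := Fin.pos_iff_nonempty.mp hN
    set M := ⨆ i, x i with hM
    set m := ⨅ i, x i with hm
    have hxM : ∀ j, x j ≤ M := fun j =>
      le_ciSup (Set.Finite.bddAbove (Set.finite_range x)) j
    have hmx : ∀ j, m ≤ x j := fun j =>
      ciInf_le (Set.Finite.bddBelow (Set.finite_range x)) j
    have hNδ : 0 ≤ 1 - N * δ := by
      have hNpos : (0 : ℝ) < N := by exact_mod_cast hN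
      have := (le_div_iff₀ hNpos).mp (by linarith [hδN] : δ ≤ 1 / N)
      nlinarith
    have key : ∀ i, (W *ᵥ x) i ≤ δ * ∑ j, x j + (1 - N * δ) * M := by
      intro i
      have h1 : (W *ᵥ x) i = δ * ∑ j, x j + ∑ j, (W i j - δ) * x j := by
        simp only [mulVec, dotProduct]
        rw [Finset.mul_sum, ← Finset.sum_add_distrib]
        congr 1; ext j; ring
      have h2 : ∑ j, (W i j - δ) * x j ≤ ∑ j, (W i j - δ) * M := by
        apply Finset.sum_le_sum
        intro j _
        exact mul_le_mul_of_nonneg_left (hxM j) (by linarith [hentry i j])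
      have h3 : ∑ j, (W i j - δ) * M = (1 - N * δ) * M := by
        rw [← Finset.sum_mul]
        congr 1
        rw [Finset.sum_sub_distrib, hrow i]
        simp [mul_comm]
      rw [h1]; linarith
    have key2 : ∀ i, δ * ∑ j, x j + (1 - N * δ) * m ≤ (W *ᵥ x) i := by
      intro i
      have h1 : (W *ᵥ x) i = δ * ∑ j, x j + ∑ j, (W i j - δ) * x j := by
        simp only [mulVec, dotProduct]
        rw [Finset.mul_sum, ← Finset.sum_add_distrib]
        congr 1; ext j; ring
      have h2 : ∑ j, (W i j - δ) * m ≤ ∑ j, (W i j - δ) * x j := by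
        apply Finset.sum_le_sum
        intro j _
        exact mul_le_mul_of_nonneg_left (hmx j) (by linarith [hentry i j])
      have h3 : ∑ j, (W i j - δ) * m = (1 - N * δ) * m := by
        rw [← Finset.sum_mul]
        congr 1
        rw [Finset.sum_sub_distrib, hrow i]
        simp [mul_comm]
      rw [h1]; linarith
    have hsup : (⨆ i, (W *ᵥ x) i) ≤ δ * ∑ j, x j + (1 - N * δ) * M :=
      ciSup_le key
    have hinf : δ * ∑ j, x j + (1 - N * δ) * m ≤ ⨅ i, (W *ᵥ x) i :=
      le_ciInf key2
    nlinarith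
end

section
/- Let A be an N×N nonnegative row-stochastic matrix whose associated directed graph G[A] (edge i→j iff A i j > 0) is strongly connected and aperiodic, and consider the continuous-time dynamics x'(t) = (A − I_N) x(t), x(0) = x₀ ∈ ℝ^N (so x(t) = exp(t(A − I_N)) x₀). Then there exist a vector ζ ∈ ℝ^N with nonnegative entries summing to 1 satisfying ζᵀ A = ζᵀ, and constants C > 0 and α > 0, such that ‖x(t) − (ζᵀ x₀) 𝟙_N‖ ≤ C · e^{−α t} · ‖x₀‖ for all t ≥ 0. -/
open Matrix Finset

/-! The generator `A - 1` has nonnegative off-diagonal entries, so `exp (t • (A - 1))` is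
row-stochastic for `t ≥ 0`, and strong connectivity makes every entry of `P = exp (A - 1)`
positive, say at least `δ > 0`. A row-stochastic matrix with all entries at least `δ` shrinks the
distance of a vector from the constant vectors by the factor `1 - δ` (Doeblin's contraction), so
`x(t)` approaches consensus like `(1 - δ) ^ ⌊t⌋`. The same positivity forces every left fixed
vector of `P`, in particular one of `A`, to have constant sign, which yields the stationary
distribution `ζ`; the quantity `ζ ⬝ᵥ x(t)` is conserved, so the consensus value is `ζ ⬝ᵥ x₀`. -/

open NormedSpace
open scoped Nat

theorem one_sub_pow_floor_le {δ : ℝ} (hδ0 : 0 ≤ δ) (hδ1 : δ ≤ 1) (t : ℝ) :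
    (1 - δ) ^ ⌊t⌋₊ ≤ Real.exp δ * Real.exp (-δ * t) :=
  calc (1 - δ) ^ ⌊t⌋₊ ≤ Real.exp (-δ) ^ ⌊t⌋₊ :=
        pow_le_pow_left₀ (by linarith) (by linarith [Real.add_one_le_exp (-δ)]) _
    _ = Real.exp (δ + -δ * (⌊t⌋₊ + 1)) := by rw [← Real.exp_nat_mul]; ring_nf
    _ ≤ Real.exp (δ + -δ * t) := Real.exp_le_exp.2 (by nlinarith [Nat.lt_floor_add_one t])
    _ = Real.exp δ * Real.exp (-δ * t) := Real.exp_add _ _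

namespace Matrix

variable {ι : Type*} [Fintype ι]

theorem mul_le_mulVec_apply {Q : Matrix ι ι ℝ} {δ : ℝ} (hδ : 0 ≤ δ) (hQ : ∀ i j, δ ≤ Q i j)
    {y : ι → ℝ} (hy : ∀ j, 0 ≤ y j) (i k : ι) : δ * y k ≤ (Q *ᵥ y) i :=
  (mul_le_mul_of_nonneg_right (hQ i k) (hy k)).trans <|
    single_le_sum (f := fun j => Q i j * y j) (fun j _ => mul_nonneg (hδ.trans (hQ i j)) (hy j))
      (mem_univ k)

theorem abs_sub_dotProduct_le {ζ y : ι → ℝ} (hζ0 : ∀ i, 0 ≤ ζ i) (hζ1 : ∑ i, ζ i = 1)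
    {c w : ℝ} (hy : ∀ i, |y i - c| ≤ w) (i : ι) : |y i - ζ ⬝ᵥ y| ≤ 2 * w := by
  have hζy : |ζ ⬝ᵥ y - c| ≤ w :=
    calc |ζ ⬝ᵥ y - c| = |∑ j, ζ j * (y j - c)| := by
          simp only [dotProduct, mul_sub, sum_sub_distrib, ← sum_mul, hζ1, one_mul]
      _ ≤ ∑ j, ζ j * |y j - c| :=
          (abs_sum_le_sum_abs _ _).trans_eq (by simp only [abs_mul, abs_of_nonneg (hζ0 _)])
      _ ≤ ∑ j, ζ j * w := sum_le_sum fun j _ => mul_le_mul_of_nonneg_left (hy j) (hζ0 j)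
      _ = w := by rw [← sum_mul, hζ1, one_mul]
  linarith [abs_sub_le (y i) c (ζ ⬝ᵥ y), abs_sub_comm c (ζ ⬝ᵥ y), hy i]

variable [DecidableEq ι]

theorem hasSum_exp (M : Matrix ι ι ℝ) :
    HasSum (fun n => (n !⁻¹ : ℝ) • M ^ n) (exp M) :=
  open scoped Norms.Operator in exp_series_hasSum_exp' M

theorem hasSum_exp_apply (M : Matrix ι ι ℝ) (i j : ι) :
    HasSum (fun n => (n !⁻¹ : ℝ) * (M ^ n) i j) (exp M i j) :=
  Pi.hasSum.1 (Pi.hasSum.1 M.hasSum_exp i) j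

theorem exp_mulVec_of_mulVec_eq_zero {M : Matrix ι ι ℝ} {u : ι → ℝ} (h : M *ᵥ u = 0) :
    exp M *ᵥ u = u := by
  have hs := M.hasSum_exp.map (mulVec.addMonoidHomLeft u)
    (Continuous.matrix_mulVec continuous_id continuous_const)
  refine (hs.unique ?_ : mulVec.addMonoidHomLeft u (exp M) = u)
  convert hasSum_ite_eq 0 u with n
  funext i
  cases n with
  | zero => simp
  | succ n => simp [pow_succ, smul_mulVec, ← mulVec_mulVec, h]

theorem vecMul_exp_of_vecMul_eq_zero {M : Matrix ι ι ℝ} {v : ι → ℝ} (h : v ᵥ* M = 0) :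
    v ᵥ* exp M = v := by
  rw [← mulVec_transpose, ← exp_transpose]
  exact exp_mulVec_of_mulVec_eq_zero (by rwa [mulVec_transpose])

theorem exp_smul_one (c : ℝ) : exp (c • (1 : Matrix ι ι ℝ)) = Real.exp c • 1 := by
  rw [smul_one_eq_diagonal, exp_diagonal, Pi.exp_def, ← Real.exp_eq_exp_ℝ, smul_one_eq_diagonal]

theorem exp_smul_sub_one (A : Matrix ι ι ℝ) (t : ℝ) :
    exp (t • (A - 1)) = Real.exp (-t) • exp (t • A) := by
  rw [smul_sub, sub_eq_add_neg, ← neg_smul,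
    exp_add_of_commute _ _ ((Commute.one_right _).smul_right _), exp_smul_one, mul_smul_comm,
    mul_one]

theorem exp_apply_nonneg {B : Matrix ι ι ℝ} (hB : ∀ i j, 0 ≤ B i j) (i j : ι) :
    0 ≤ exp B i j :=
  (B.hasSum_exp_apply i j).nonneg fun n => mul_nonneg (by positivity) (pow_apply_nonneg hB n i j)

theorem inv_factorial_mul_pow_apply_le_exp_apply {B : Matrix ι ι ℝ} (hB : ∀ i j, 0 ≤ B i j)
    (k : ℕ) (i j : ι) : (k !⁻¹ : ℝ) * (B ^ k) i j ≤ exp B i j :=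
  le_hasSum (B.hasSum_exp_apply i j) k fun n _ =>
    mul_nonneg (by positivity) (pow_apply_nonneg hB n i j)

theorem exp_smul_sub_one_mem_rowStochastic {A : Matrix ι ι ℝ} (hA : A ∈ rowStochastic ℝ ι)
    {t : ℝ} (ht : 0 ≤ t) : exp (t • (A - 1)) ∈ rowStochastic ℝ ι := by
  refine ⟨fun i j => ?_, exp_mulVec_of_mulVec_eq_zero ?_⟩
  · rw [exp_smul_sub_one, smul_apply, smul_eq_mul]
    exact mul_nonneg (Real.exp_pos _).le
      (exp_apply_nonneg (fun i j => mul_nonneg ht (hA.1 i j)) i j)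
  · rw [smul_mulVec, sub_mulVec, hA.2, one_mulVec, sub_self, smul_zero]

theorem exp_sub_one_apply_pos {A : Matrix ι ι ℝ} (hA : ∀ i j, 0 ≤ A i j) {k : ℕ} {i j : ι}
    (hk : 0 < (A ^ k) i j) : 0 < exp (A - 1) i j := by
  have h := exp_smul_sub_one A 1
  rw [one_smul, one_smul] at h
  rw [h, smul_apply, smul_eq_mul]
  exact mul_pos (Real.exp_pos _)
    ((by positivity : (0 : ℝ) < (k !⁻¹ : ℝ) * (A ^ k) i j).trans_le
      (inv_factorial_mul_pow_apply_le_exp_apply hA k i j))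

/-- The new centre `c + δ * (x k - c)` may be taken at any coordinate `k`, so, unlike the usual
max/min argument, no extremal coordinates are needed. -/
theorem exists_abs_mulVec_sub_le [Nonempty ι] {Q : Matrix ι ι ℝ} (hQ : Q ∈ rowStochastic ℝ ι)
    {δ : ℝ} (hδ : 0 ≤ δ) (hδQ : ∀ i j, δ ≤ Q i j) {x : ι → ℝ} {c w : ℝ}
    (hx : ∀ i, |x i - c| ≤ w) : ∃ c' : ℝ, ∀ i, |(Q *ᵥ x) i - c'| ≤ (1 - δ) * w := by
  obtain ⟨k⟩ := ‹Nonempty ι›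
  have affine (a b : ℝ) (i : ι) : (Q *ᵥ fun j => a * x j + b) i = a * (Q *ᵥ x) i + b := by
    simp only [mulVec, dotProduct, mul_add, sum_add_distrib, ← sum_mul,
      sum_row_of_mem_rowStochastic hQ i, one_mul, mul_left_comm _ a, ← mul_sum]
  refine ⟨c + δ * (x k - c), fun i => abs_le.2 ⟨?_, ?_⟩⟩
  · have h := mul_le_mulVec_apply hδ hδQ (y := fun j => 1 * x j + (w - c))
      (fun j => by linarith [(abs_le.1 (hx j)).1]) i k
    rw [affine] at h
    linarith
  · have h := mul_le_mulVec_apply hδ hδQ (y := fun j => -1 * x j + (c + w))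
      (fun j => by linarith [(abs_le.1 (hx j)).2]) i k
    rw [affine] at h
    linarith

theorem exists_abs_pow_mulVec_sub_le [Nonempty ι] {Q : Matrix ι ι ℝ}
    (hQ : Q ∈ rowStochastic ℝ ι) {δ : ℝ} (hδ : 0 ≤ δ) (hδQ : ∀ i j, δ ≤ Q i j) {x : ι → ℝ}
    {c w : ℝ} (hx : ∀ i, |x i - c| ≤ w) (n : ℕ) :
    ∃ c' : ℝ, ∀ i, |(Q ^ n *ᵥ x) i - c'| ≤ (1 - δ) ^ n * w := by
  induction n with
  | zero => exact ⟨c, by simpa using hx⟩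
  | succ n ih =>
    obtain ⟨c', hc'⟩ := ih
    obtain ⟨c'', hc''⟩ := exists_abs_mulVec_sub_le hQ hδ hδQ hc'
    refine ⟨c'', fun i => ?_⟩
    rw [pow_succ', ← mulVec_mulVec]
    exact (hc'' i).trans_eq (by ring)

theorem pos_or_nonpos_of_vecMul_eq_self {P : Matrix ι ι ℝ} (hP : P ∈ rowStochastic ℝ ι)
    (hpos : ∀ i j, 0 < P i j) {w : ι → ℝ} (hw : w ᵥ* P = w) :
    (∀ j, 0 < w j) ∨ ∀ j, w j ≤ 0 := by
  set p : ι → ℝ := fun k => max (w k) 0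
  have hp0 : ∀ k, 0 ≤ p k := fun k => le_max_right _ _
  have hle : ∀ j, p j ≤ (p ᵥ* P) j := fun j =>
    max_le
      (calc w j = (w ᵥ* P) j := by rw [hw]
        _ ≤ (p ᵥ* P) j :=
          sum_le_sum fun k _ => mul_le_mul_of_nonneg_right (le_max_left _ _) (hP.1 k j))
      (nonneg_vecMul_of_mem_rowStochastic hP hp0 j)
  -- `P` preserves the total mass of `p`, so the inequalities `hle` are equalities.
  have hmass : ∑ j, (p ᵥ* P) j = ∑ j, p j := by
    simpa [dotProduct, hP.2] using (dotProduct_mulVec p P 1).symm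
  have hfix : ∀ j, p j = (p ᵥ* P) j := fun j =>
    (sum_eq_sum_iff_of_le fun j _ => hle j).1 hmass.symm j (mem_univ j)
  by_cases h : ∃ k, 0 < w k
  · obtain ⟨k, hk⟩ := h
    refine Or.inl fun j => ?_
    have hpj : 0 < p j :=
      calc 0 < p k * P k j := mul_pos (lt_max_of_lt_left hk) (hpos k j)
        _ ≤ (p ᵥ* P) j := single_le_sum (f := fun l => p l * P l j)
            (fun l _ => mul_nonneg (hp0 l) (hP.1 l j)) (mem_univ k)
        _ = p j := (hfix j).symm
    exact (lt_max_iff.1 hpj).resolve_right (lt_irrefl 0)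
  · simp only [not_exists, not_lt] at h
    exact Or.inr h

theorem exists_ne_zero_vecMul_eq_self [Nonempty ι] {A : Matrix ι ι ℝ} (hA : A *ᵥ 1 = 1) :
    ∃ w ≠ 0, w ᵥ* A = w := by
  have hdet : (A - 1).det = 0 := exists_mulVec_eq_zero_iff.1
    ⟨1, one_ne_zero, by rw [sub_mulVec, hA, one_mulVec, sub_self]⟩
  obtain ⟨w, hw0, hw⟩ := exists_vecMul_eq_zero_iff.2 hdet
  exact ⟨w, hw0, by rwa [vecMul_sub, vecMul_one, sub_eq_zero] at hw⟩

theorem exists_stationary_of_pos [Nonempty ι] {A P : Matrix ι ι ℝ} (hA : A *ᵥ 1 = 1)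
    (hP : P ∈ rowStochastic ℝ ι) (hpos : ∀ i j, 0 < P i j)
    (hAP : ∀ w, w ᵥ* A = w → w ᵥ* P = w) :
    ∃ ζ : ι → ℝ, (∀ i, 0 ≤ ζ i) ∧ ∑ i, ζ i = 1 ∧ ζ ᵥ* A = ζ := by
  obtain ⟨w, hw0, hwA⟩ := exists_ne_zero_vecMul_eq_self hA
  suffices ∃ v : ι → ℝ, v ≠ 0 ∧ (∀ i, 0 ≤ v i) ∧ v ᵥ* A = v by
    obtain ⟨v, hv0, hv, hvA⟩ := this
    obtain ⟨k, hk⟩ := Function.ne_iff.1 hv0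
    have hsum : 0 < ∑ i, v i := sum_pos' (fun i _ => hv i) ⟨k, mem_univ k, (hv k).lt_of_ne' hk⟩
    refine ⟨(∑ i, v i)⁻¹ • v, fun i => mul_nonneg (inv_nonneg.2 hsum.le) (hv i), ?_, ?_⟩
    · simp only [Pi.smul_apply, smul_eq_mul, ← mul_sum, inv_mul_cancel₀ hsum.ne']
    · rw [smul_vecMul, hvA]
  rcases pos_or_nonpos_of_vecMul_eq_self hP hpos (hAP w hwA) with h | h
  · exact ⟨w, hw0, fun i => (h i).le, hwA⟩
  · exact ⟨-w, neg_ne_zero.2 hw0, fun i => neg_nonneg.2 (h i), by rw [neg_vecMul, hwA]⟩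

theorem norm_exp_smul_mulVec_sub_le [Nonempty ι] {M : Matrix ι ι ℝ}
    (hM : ∀ t : ℝ, 0 ≤ t → exp (t • M) ∈ rowStochastic ℝ ι) {δ : ℝ} (hδ : 0 ≤ δ)
    (hδM : ∀ i j, δ ≤ exp M i j) {ζ : ι → ℝ} (hζ0 : ∀ i, 0 ≤ ζ i) (hζ1 : ∑ i, ζ i = 1)
    (hζM : ζ ᵥ* M = 0) (x : ι → ℝ) {t : ℝ} (ht : 0 ≤ t) :
    ‖exp (t • M) *ᵥ x - (ζ ⬝ᵥ x) • 1‖ ≤ 2 * Real.exp δ * Real.exp (-δ * t) * ‖x‖ := by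
  set n := ⌊t⌋₊
  have hP : exp M ∈ rowStochastic ℝ ι := by simpa using hM 1 zero_le_one
  obtain ⟨k⟩ := ‹Nonempty ι›
  have hδ1 : δ ≤ 1 := (hδM k k).trans (le_one_of_mem_rowStochastic hP)
  have hS : exp ((t - n) • M) ∈ rowStochastic ℝ ι := hM _ (sub_nonneg.2 (Nat.floor_le ht))
  have hsplit : exp (t • M) = exp ((t - n) • M) * exp M ^ n := by
    rw [← exp_nsmul, ← Nat.cast_smul_eq_nsmul ℝ,
      ← exp_add_of_commute _ _ (((Commute.refl M).smul_left _).smul_right _), ← add_smul,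
      sub_add_cancel]
  have hζx : ζ ⬝ᵥ x = ζ ⬝ᵥ (exp (t • M) *ᵥ x) := by
    rw [dotProduct_mulVec, vecMul_exp_of_vecMul_eq_zero (by rw [vecMul_smul, hζM, smul_zero])]
  obtain ⟨c, hc⟩ := exists_abs_pow_mulVec_sub_le hP hδ hδM (c := 0) (w := ‖x‖)
    (fun i => by simpa using norm_le_pi_norm x i) n
  obtain ⟨c', hc'⟩ := exists_abs_mulVec_sub_le hS le_rfl hS.1 hc
  simp only [mulVec_mulVec, ← hsplit, sub_zero, one_mul] at hc'
  rw [pi_norm_le_iff_of_nonneg (by positivity)]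
  intro i
  calc ‖(exp (t • M) *ᵥ x - (ζ ⬝ᵥ x) • 1) i‖
      = |(exp (t • M) *ᵥ x) i - ζ ⬝ᵥ (exp (t • M) *ᵥ x)| := by simp [hζx]
    _ ≤ 2 * ((1 - δ) ^ n * ‖x‖) := abs_sub_dotProduct_le hζ0 hζ1 hc' i
    _ ≤ 2 * (Real.exp δ * Real.exp (-δ * t) * ‖x‖) := by
        gcongr
        exact one_sub_pow_floor_le hδ hδ1 t
    _ = 2 * Real.exp δ * Real.exp (-δ * t) * ‖x‖ := by ring

section Graph

variable {N : ℕ} {A : Matrix (Fin N) (Fin N) ℝ}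

theorem HasWalkOfLength.pow_apply_pos (hA : ∀ i j, 0 ≤ A i j) :
    ∀ {k : ℕ} {i j : Fin N}, A.HasWalkOfLength k i j → 0 < (A ^ k) i j
  | 0, i, j, ⟨f, hf0, hfl, _⟩ => by
    obtain rfl : i = j := hf0.symm.trans hfl
    simp
  | k + 1, i, j, ⟨f, hf0, hfl, hstep⟩ => by
    have hwalk : A.HasWalkOfLength k i (f (Fin.last k).castSucc) :=
      ⟨fun t => f t.castSucc, hf0, rfl, fun t => by simpa using hstep t.castSucc⟩
    rw [pow_succ, mul_apply]
    exact sum_pos' (fun l _ => mul_nonneg (pow_apply_nonneg hA k i l) (hA l j))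
      ⟨_, mem_univ _, mul_pos (pow_apply_pos hA hwalk) (by simpa [hfl] using hstep (Fin.last k))⟩

theorem StronglyConnectedGraph.exists_pow_apply_pos (hA : ∀ i j, 0 ≤ A i j)
    (hsc : A.StronglyConnectedGraph) (i j : Fin N) : ∃ k, 0 < (A ^ k) i j := by
  by_cases hij : i = j
  · exact ⟨0, by simp [hij]⟩
  · obtain ⟨k, -, hk⟩ := hsc i j hij
    exact ⟨k, hk.pow_apply_pos hA⟩

theorem AperiodicGraph.nonempty (hap : A.AperiodicGraph) : Nonempty (Fin N) := by
  by_contra h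
  have h21 := hap 2 fun k ⟨_, f, _⟩ => (h ⟨f 0⟩).elim
  norm_num at h21

end Graph

end Matrix

/-- exponential convergence to consensus for the continuous-time
(GRAND-type) French–DeGroot dynamics `x'(t) = (A − I) x(t)`, i.e.
`x(t) = exp(t(A − I)) x₀`, when `G[A]` is strongly connected and aperiodic. -/
theorem continuous_french_degroot_consensus {N : ℕ}
    (A : Matrix (Fin N) (Fin N) ℝ)
    (hnonneg : ∀ i j, 0 ≤ A i j)
    (hrow : ∀ i, ∑ j, A i j = 1)
    (hsc : A.StronglyConnectedGraph)
    (hap : A.AperiodicGraph) :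
    ∃ (ζ : Fin N → ℝ) (C α : ℝ),
      (∀ i, 0 ≤ ζ i) ∧ (∑ i, ζ i = 1) ∧ ζ ᵥ* A = ζ ∧
      0 < C ∧ 0 < α ∧
      ∀ (x0 : Fin N → ℝ) (t : ℝ), 0 ≤ t →
        ‖(NormedSpace.exp (t • (A - 1))) *ᵥ x0 - (ζ ⬝ᵥ x0) • (fun _ : Fin N => (1 : ℝ))‖
          ≤ C * Real.exp (-α * t) * ‖x0‖ := by
  have := hap.nonempty
  have hA : A ∈ rowStochastic ℝ (Fin N) := mem_rowStochastic_iff_sum.2 ⟨hnonneg, hrow⟩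
  have hstoch (t : ℝ) (ht : 0 ≤ t) := exp_smul_sub_one_mem_rowStochastic hA ht
  have hP : exp (A - 1) ∈ rowStochastic ℝ (Fin N) := by simpa using hstoch 1 zero_le_one
  have hpos (i j : Fin N) : 0 < exp (A - 1) i j :=
    (hsc.exists_pow_apply_pos hnonneg i j).elim fun _ hk => exp_sub_one_apply_pos hnonneg hk
  obtain ⟨ζ, hζ0, hζ1, hζA⟩ := exists_stationary_of_pos hA.2 hP hpos fun w hw =>
    vecMul_exp_of_vecMul_eq_zero (by rw [vecMul_sub, hw, vecMul_one, sub_self])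
  obtain ⟨⟨i₀, j₀⟩, hmin⟩ := Finite.exists_min fun p : Fin N × Fin N => exp (A - 1) p.1 p.2
  set δ := exp (A - 1) i₀ j₀
  refine ⟨ζ, 2 * Real.exp δ, δ, hζ0, hζ1, hζA, by positivity, hpos i₀ j₀, fun x0 t ht => ?_⟩
  exact norm_exp_smul_mulVec_sub_le hstoch (hpos i₀ j₀).le (fun i j => hmin (i, j)) hζ0 hζ1
    (by rw [vecMul_sub, hζA, vecMul_one, sub_self]) x0 ht
end

section
/- Let H be an N×M matrix with entries in {0,1} (the incidence matrix of a hypergraph with N nodes and M hyperedges), let W be an M×M diagonal matrix with strictly positive diagonal entries (hyperedge weights), let D_e be the M×M diagonal matrix with (D_e)_{ee} = Σ_{i} H_{i e}, and let D_v be the N×N diagonal matrix with (D_v)_{ii} = Σ_{e} H_{i e} W_{ee}. Assume every hyperedge contains at least one node and every node lies in at least one hyperedge, so D_e and D_v are invertible. Then the normalized hypergraph Laplacian L = I_N − D_v^{−1/2} H W D_e^{−1} Hᵀ D_v^{−1/2} is symmetric positive semidefinite: L = Lᵀ and xᵀ L x ≥ 0 for all x ∈ ℝ^N. -/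
open Matrix Finset

/-- Quadratic form of `A * diagonal c * Aᵀ`. -/
lemma quad_diag_form {N M : ℕ} (A : Matrix (Fin N) (Fin M) ℝ) (c : Fin M → ℝ) (x : Fin N → ℝ) :
    x ⬝ᵥ ((A * Matrix.diagonal c * Aᵀ) *ᵥ x) = ∑ e, c e * (∑ i, A i e * x i) ^ 2 := by
  have h1 : ∀ i, ((A * Matrix.diagonal c * Aᵀ) *ᵥ x) i
      = ∑ e, A i e * c e * ∑ j, A j e * x j := by
    intro i
    rw [← Matrix.mulVec_mulVec]
    simp only [mulVec, dotProduct, Matrix.mul_diagonal, Matrix.transpose_apply]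
  simp only [dotProduct, h1, Finset.mul_sum]
  rw [Finset.sum_comm]
  refine Finset.sum_congr rfl fun e _ => ?_
  rw [sq, Finset.sum_mul_sum]
  simp only [Finset.mul_sum]
  exact Finset.sum_congr rfl fun i _ => Finset.sum_congr rfl fun j _ => by ring

/-- the normalized hypergraph Laplacian
`L = I − D_v^{−1/2} H W D_e^{−1} Hᵀ D_v^{−1/2}` is symmetric positive semidefinite. -/
theorem normalized_hypergraph_laplacian_psd {N M : ℕ}
    (H : Matrix (Fin N) (Fin M) ℝ)
    (hH : ∀ i e, H i e = 0 ∨ H i e = 1)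
    (w : Fin M → ℝ) (hw : ∀ e, 0 < w e)
    (hedge : ∀ e, ∃ i, H i e = 1)
    (hnode : ∀ i, ∃ e, H i e = 1) :
    let DeInv : Matrix (Fin M) (Fin M) ℝ :=
      Matrix.diagonal fun e => (∑ i, H i e)⁻¹
    let DvInvSqrt : Matrix (Fin N) (Fin N) ℝ :=
      Matrix.diagonal fun i => (Real.sqrt (∑ e, H i e * w e))⁻¹
    let L : Matrix (Fin N) (Fin N) ℝ :=
      1 - DvInvSqrt * H * Matrix.diagonal w * DeInv * Hᵀ * DvInvSqrt
    L.IsSymm ∧ ∀ x : Fin N → ℝ, 0 ≤ x ⬝ᵥ (L *ᵥ x) := by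
  intro DeInv DvInvSqrt L
  have hH0 : ∀ i e, 0 ≤ H i e := fun i e => by rcases hH i e with h | h <;> simp [h]
  set d : Fin N → ℝ := fun i => ∑ e, H i e * w e with hd_def
  set δ : Fin M → ℝ := fun e => ∑ i, H i e with hδ_def
  set a : Fin N → ℝ := fun i => (Real.sqrt (d i))⁻¹ with ha_def
  set c : Fin M → ℝ := fun e => w e * (δ e)⁻¹ with hc_def
  have hd : ∀ i, 0 < d i := by
    intro i
    obtain ⟨e, he⟩ := hnode i
    refine Finset.sum_pos' (fun e _ => mul_nonneg (hH0 i e) (hw e).le)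
      ⟨e, mem_univ e, ?_⟩
    simp only [he, one_mul]
    exact hw e
  have hδ : ∀ e, 0 < δ e := by
    intro e
    obtain ⟨i, hi⟩ := hedge e
    exact Finset.sum_pos' (fun i _ => hH0 i e) ⟨i, mem_univ i, by simp [hi]⟩
  have ha2 : ∀ i, a i ^ 2 = (d i)⁻¹ := by
    intro i
    show ((Real.sqrt (d i))⁻¹) ^ 2 = (d i)⁻¹
    rw [← Real.sqrt_inv, Real.sq_sqrt (inv_nonneg.mpr (hd i).le)]
  -- factor the interaction part as `B * diagonal c * Bᵀ`
  have hSfact : DvInvSqrt * H * Matrix.diagonal w * DeInv * Hᵀ * DvInvSqrt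
      = (Matrix.diagonal a * H) * Matrix.diagonal c * (Matrix.diagonal a * H)ᵀ := by
    rw [Matrix.transpose_mul, Matrix.diagonal_transpose]
    have h2 : Matrix.diagonal w * DeInv = Matrix.diagonal c := by
      show Matrix.diagonal w * Matrix.diagonal (fun e => (∑ i, H i e)⁻¹) = _
      rw [Matrix.diagonal_mul_diagonal]
    have hDv : DvInvSqrt = Matrix.diagonal a := rfl
    rw [hDv, ← h2]
    simp only [Matrix.mul_assoc]
  constructor
  · show Lᵀ = L
    show (1 - DvInvSqrt * H * Matrix.diagonal w * DeInv * Hᵀ * DvInvSqrt)ᵀ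
        = 1 - DvInvSqrt * H * Matrix.diagonal w * DeInv * Hᵀ * DvInvSqrt
    rw [hSfact, Matrix.transpose_sub, Matrix.transpose_one]
    congr 1
    simp only [Matrix.transpose_mul, Matrix.transpose_transpose, Matrix.diagonal_transpose,
      Matrix.mul_assoc]
  · intro x
    have hLx : x ⬝ᵥ (L *ᵥ x)
        = ∑ i, x i ^ 2 - ∑ e, c e * (∑ i, (Matrix.diagonal a * H) i e * x i) ^ 2 := by
      show x ⬝ᵥ ((1 - DvInvSqrt * H * Matrix.diagonal w * DeInv * Hᵀ * DvInvSqrt) *ᵥ x) = _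
      rw [Matrix.sub_mulVec, dotProduct_sub, Matrix.one_mulVec, hSfact, quad_diag_form]
      congr 1
      simp [dotProduct, sq]
    rw [hLx, sub_nonneg]
    have hB : ∀ i e, (Matrix.diagonal a * H) i e = a i * H i e := fun i e =>
      Matrix.diagonal_mul a H i e
    calc ∑ e, c e * (∑ i, (Matrix.diagonal a * H) i e * x i) ^ 2
        ≤ ∑ e, w e * ∑ i, H i e * (a i * x i) ^ 2 := by
          refine Finset.sum_le_sum fun e _ => ?_
          have hcs : (∑ i, (Matrix.diagonal a * H) i e * x i) ^ 2
              ≤ δ e * ∑ i, H i e * (a i * x i) ^ 2 := by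
            have key := Finset.sum_mul_sq_le_sq_mul_sq Finset.univ (fun i => H i e)
              (fun i => H i e * (a i * x i))
            have e1 : ∑ i, (Matrix.diagonal a * H) i e * x i
                = ∑ i, H i e * (H i e * (a i * x i)) := by
              refine Finset.sum_congr rfl fun i _ => ?_
              rw [hB]
              rcases hH i e with h | h <;> simp [h]
            have e2 : ∑ i, H i e ^ 2 = δ e := by
              show _ = ∑ i, H i e
              refine Finset.sum_congr rfl fun i _ => ?_
              rcases hH i e with h | h <;> simp [h]
            have e3 : ∑ i, (H i e * (a i * x i)) ^ 2 = ∑ i, H i e * (a i * x i) ^ 2 := by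
              refine Finset.sum_congr rfl fun i _ => ?_
              rcases hH i e with h | h <;> simp [h]
            rw [e1]
            calc (∑ i, H i e * (H i e * (a i * x i))) ^ 2
                ≤ (∑ i, H i e ^ 2) * ∑ i, (H i e * (a i * x i)) ^ 2 := key
              _ = δ e * ∑ i, H i e * (a i * x i) ^ 2 := by rw [e2, e3]
          calc c e * (∑ i, (Matrix.diagonal a * H) i e * x i) ^ 2
              ≤ c e * (δ e * ∑ i, H i e * (a i * x i) ^ 2) := by
                refine mul_le_mul_of_nonneg_left hcs ?_
                exact mul_nonneg (hw e).le (inv_nonneg.mpr (hδ e).le)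
            _ = w e * ∑ i, H i e * (a i * x i) ^ 2 := by
                simp only [hc_def]
                rw [mul_assoc, ← mul_assoc ((δ e)⁻¹), inv_mul_cancel₀ (hδ e).ne', one_mul]
      _ = ∑ i, x i ^ 2 := by
          simp only [Finset.mul_sum]
          rw [Finset.sum_comm]
          refine Finset.sum_congr rfl fun i _ => ?_
          have h1 : ∑ e, w e * (H i e * (a i * x i) ^ 2) = (a i * x i) ^ 2 * d i := by
            simp only [hd_def, Finset.mul_sum]
            exact Finset.sum_congr rfl fun e _ => by ring
          rw [h1, mul_pow, ha2 i, mul_comm ((d i)⁻¹), mul_assoc,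
            inv_mul_cancel₀ (hd i).ne', mul_one]
end
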